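/- arXiv:2603.21372 — 6 statements merged into one kernel-verified Lean document; each statement's English description precedes it below -/
import Mathlib

section
/- Let P be a finite poset and c : P → P a closure operator (increasing, order-preserving, idempotent), and let P̄ denote the subposet of closed elements. Suppose f : P → ℂ and g : P̄ → ℂ are functions such that for every closed element x we have ∑_{y ∈ P, y ≤ x} f(y) = ∑_{y ∈ P̄, y ≤ x} g(y). Then for every closed element y, g(y) = ∑_{z ∈ P, c(z) = y} f(z). -/
/-!
Summing `f` fiberwise over the closure map gives `h y := ∑_{c z = y} f z` on closed elements, and
since `z ≤ x ↔ c z ≤ x` for closed `x`, the partial sums of `h` below each closed `x` equal those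
of `f`, hence those of `g`. Functions with the same partial sums over all lower sets agree
(Möbius inversion, here just well-founded induction on the finite poset), so `g = h`.
-/

open Finset

theorem Finset.eq_of_forall_sum_Iic_eq {α M : Type*} [PartialOrder α] [LocallyFiniteOrderBot α]
    [AddCancelCommMonoid M] {u v : α → M} (h : ∀ x, ∑ y ∈ Iic x, u y = ∑ y ∈ Iic x, v y) :
    u = v := by
  have hwf : WellFounded ((· < ·) : α → α → Prop) :=
    (measure fun x => #(Iio x)).wf.mono fun _ _ hlt => card_lt_card (Iio_ssubset_Iio hlt)
  funext x
  induction x using hwf.induction with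
  | _ x ih =>
    have hIio : ∑ y ∈ Iio x, u y = ∑ y ∈ Iio x, v y :=
      sum_congr rfl fun y hy => ih y (mem_Iio.1 hy)
    have hx := h x
    rwa [← sum_Iio_add_eq_sum_Iic, ← sum_Iio_add_eq_sum_Iic, hIio, add_right_inj] at hx

namespace ClosureOperator

variable {α M : Type*} [PartialOrder α] [Fintype α] [DecidableLE α] [DecidableEq α]
  [AddCommMonoid M] (c : ClosureOperator α) [DecidablePred c.IsClosed]

theorem sum_le_closed_eq_sum_fiberwise (f : α → M) (x : c.Closeds) :
    ∑ y with y ≤ x.1, f y = ∑ q : c.Closeds with q ≤ x, ∑ z with c z = q.1, f z :=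
  calc ∑ y with y ≤ x.1, f y
      = ∑ y with c.toCloseds y ∈ ({q | q ≤ x} : Finset c.Closeds), f y := by
        refine sum_congr (filter_congr fun y _ => ?_) fun _ _ => rfl
        rw [mem_filter, and_iff_right (mem_univ _)]
        exact x.2.closure_le_iff.symm
    _ = ∑ q : c.Closeds with q ≤ x, ∑ z with c z = q.1, f z := by
        rw [← sum_fiberwise_eq_sum_filter]
        exact sum_congr rfl fun q _ =>
          sum_congr (filter_congr fun _ _ => Subtype.ext_iff) fun _ _ => rfl

end ClosureOperator

/-- Closure operator summation lemma (Lemma 2.8). -/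
theorem closure_operator_sum
    (P : Type*) [Fintype P] [PartialOrder P] [DecidableEq P]
    [DecidableRel ((· ≤ ·) : P → P → Prop)]
    (c : P → P)
    (hincr : ∀ x, x ≤ c x)
    (hmono : ∀ x y, x ≤ y → c x ≤ c y)
    (hidem : ∀ x, c (c x) = c x)
    (f : P → ℂ) (g : {x : P // c x = x} → ℂ)
    (hFg : ∀ x : {x : P // c x = x},
      ∑ y ∈ Finset.univ.filter (fun y => y ≤ x.1), f y
        = ∑ y ∈ Finset.univ.filter (fun y : {x : P // c x = x} => y.1 ≤ x.1), g y) :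
    ∀ y : {x : P // c x = x},
      g y = ∑ z ∈ Finset.univ.filter (fun z => c z = y.1), f z := by
  let C : ClosureOperator P := .mk' c (fun _ _ => hmono _ _) hincr fun x => (hidem x).le
  let _ : DecidablePred C.IsClosed := fun x => decEq (c x) x
  -- `Iic x` is then definitionally the filter appearing in `hFg`.
  let _ := LocallyFiniteOrderBot.ofIic' {x : P // c x = x} (fun x => {y | y ≤ x}) (by simp)
  have hsums (x : {x : P // c x = x}) :
      ∑ q ∈ Iic x, g q = ∑ q ∈ Iic x, ∑ z with c z = q.1, f z :=
    (hFg x).symm.trans (C.sum_le_closed_eq_sum_fiberwise f x)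
  exact congr_fun (eq_of_forall_sum_Iic_eq hsums)
end

section
/- Let (M, φ, ψ) be a two-state noncommutative probability space with c-free subalgebras A, B, and let a ∈ A, b ∈ B. Then for all n ≥ 0, φ(a b a^n) = φ(a^{n+1}) ψ(b) + φ(a) φ(a^n)(φ(b) − ψ(b)). Consequently, if E denotes the right quasi-conditional expectation onto the algebra generated by a (characterized by φ(x Q(a)) = φ(E[x] Q(a)) for all polynomials Q), then E[a b] = ψ(b)·a + φ(a)(φ(b) − ψ(b))·1, which in general differs from a·E[b] = φ(b)·a. Hence the left modular property E[a x] = a E[x] fails for the right quasi-conditional expectation. -/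
/-!
Writing `b = b₀ + ψ(b)·1` with `ψ(b₀) = 0` splits `φ(a b y)` into `ψ(b) φ(a y)` plus
`φ(a b₀ y)`. For `x, y ∈ A`, centering `x` and `y` as well and applying c-freeness to the
alternating words of length two and three gives `φ(x b₀ y) = φ(x) φ(b₀) φ(y)`. Hence for every
`y ∈ A`, `φ(a b y) = ψ(b) φ(a y) + φ(a) φ(y) (φ(b) - ψ(b))`; taking `y = aⁿ` gives the moment
identity and `y = Q(a)` the defining property of `E[a b]`.
-/

/-- Conditional freeness (c-freeness) of two subalgebras `A`, `B` of a
two-state noncommutative probability space `(M, φ, ψ)`: for any alternating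
tuple of `ψ`-centered elements from `A ∪ B`, the product is `ψ`-centered and
`φ` factorizes over it. -/
def CFree (M : Type*) [Ring M] [Algebra ℂ M] (φ ψ : M →ₗ[ℂ] ℂ)
    (A B : Subalgebra ℂ M) : Prop :=
  ∀ l : List (M × Bool), l ≠ [] →
    (l.map Prod.snd).Chain' (· ≠ ·) →
    (∀ p ∈ l, (p.2 = true → p.1 ∈ A) ∧ (p.2 = false → p.1 ∈ B) ∧ ψ p.1 = 0) →
    ψ (l.map Prod.fst).prod = 0 ∧
      φ (l.map Prod.fst).prod = ((l.map Prod.fst).map φ).prod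

theorem Subalgebra.exists_centered_add_smul_one {M : Type*} [Ring M] [Algebra ℂ M]
    {ψ : M →ₗ[ℂ] ℂ} (hψ1 : ψ 1 = 1) {S : Subalgebra ℂ M} {x : M} (hx : x ∈ S) :
    ∃ x₀ ∈ S, ∃ c : ℂ, ψ x₀ = 0 ∧ x = x₀ + c • 1 :=
  ⟨x - ψ x • 1, sub_mem hx (S.smul_mem S.one_mem _), ψ x, by simp [hψ1], by abel⟩

namespace CFree

variable {M : Type*} [Ring M] [Algebra ℂ M] {φ ψ : M →ₗ[ℂ] ℂ} {A B : Subalgebra ℂ M}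

theorem map_mul_of_centered_left (hcf : CFree M φ ψ A B) {x b : M} (hx : x ∈ A) (hb : b ∈ B)
    (hψx : ψ x = 0) (hψb : ψ b = 0) : φ (x * b) = φ x * φ b := by
  simpa using (hcf [(x, true), (b, false)] (by simp)
    (by decide : List.IsChain (· ≠ ·) [true, false]) (by simp [*])).2

theorem map_mul_of_centered_right (hcf : CFree M φ ψ A B) {b y : M} (hb : b ∈ B) (hy : y ∈ A)
    (hψb : ψ b = 0) (hψy : ψ y = 0) : φ (b * y) = φ b * φ y := by
  simpa using (hcf [(b, false), (y, true)] (by simp)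
    (by decide : List.IsChain (· ≠ ·) [false, true]) (by simp [*])).2

theorem map_mul_mul_of_centered (hcf : CFree M φ ψ A B) {x b y : M} (hx : x ∈ A) (hb : b ∈ B)
    (hy : y ∈ A) (hψx : ψ x = 0) (hψb : ψ b = 0) (hψy : ψ y = 0) :
    φ (x * b * y) = φ x * φ b * φ y := by
  simpa [mul_assoc] using (hcf [(x, true), (b, false), (y, true)] (by simp)
    (by decide : List.IsChain (· ≠ ·) [true, false, true]) (by simp [*])).2

theorem map_mul_mul_of_centered_middle (hcf : CFree M φ ψ A B) (hφ1 : φ 1 = 1)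
    (hψ1 : ψ 1 = 1) {x b y : M} (hx : x ∈ A) (hb : b ∈ B) (hy : y ∈ A) (hψb : ψ b = 0) :
    φ (x * b * y) = φ x * φ b * φ y := by
  obtain ⟨x₀, hx₀, c, hψx₀, rfl⟩ := A.exists_centered_add_smul_one hψ1 hx
  obtain ⟨y₀, hy₀, d, hψy₀, rfl⟩ := A.exists_centered_add_smul_one hψ1 hy
  have hexpand : (x₀ + c • 1) * b * (y₀ + d • 1)
      = x₀ * b * y₀ + d • (x₀ * b) + c • (b * y₀) + (c * d) • b := by
    simp only [add_mul, mul_add, smul_mul_assoc, mul_smul_comm, one_mul, mul_one]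
    module
  rw [hexpand]
  simp only [map_add, map_smul, smul_eq_mul, hφ1, mul_one,
    hcf.map_mul_mul_of_centered hx₀ hb hy₀ hψx₀ hψb hψy₀,
    hcf.map_mul_of_centered_left hx₀ hb hψx₀ hψb,
    hcf.map_mul_of_centered_right hb hy₀ hψb hψy₀]
  ring

theorem map_mul_mul_of_mem (hcf : CFree M φ ψ A B) (hφ1 : φ 1 = 1) (hψ1 : ψ 1 = 1)
    {x b y : M} (hx : x ∈ A) (hb : b ∈ B) (hy : y ∈ A) :
    φ (x * b * y) = ψ b * φ (x * y) + φ x * φ y * (φ b - ψ b) := by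
  obtain ⟨b₀, hb₀, c, hψb₀, rfl⟩ := B.exists_centered_add_smul_one hψ1 hb
  have hexpand : x * (b₀ + c • 1) * y = x * b₀ * y + c • (x * y) := by
    simp only [mul_add, add_mul, mul_smul_comm, smul_mul_assoc, mul_one]
  rw [hexpand, map_add, map_smul, hcf.map_mul_mul_of_centered_middle hφ1 hψ1 hx hb₀ hy hψb₀]
  simp only [map_add, map_smul, hφ1, hψ1, hψb₀, smul_eq_mul]
  ring

end CFree

/-- for c-free `a ∈ A`, `b ∈ B` one has the moment identity
`φ(a b aⁿ) = φ(aⁿ⁺¹) ψ(b) + φ(a) φ(aⁿ)(φ(b) − ψ(b))` for all `n ≥ 0`.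
Consequently the right quasi-conditional expectation `E` onto the algebra
generated by `a` (characterized by `φ(x Q(a)) = φ(E[x] Q(a))` for all
polynomials `Q`) satisfies `E[a b] = ψ(b)·a + φ(a)(φ(b) − ψ(b))·1`, exhibiting
the failure of the left modular property `E[a x] = a E[x]` (whose right-hand
side would be `φ(b)·a`). -/
theorem cfree_right_condexp_left_modular_failure
    (M : Type*) [Ring M] [Algebra ℂ M]
    (φ ψ : M →ₗ[ℂ] ℂ) (hφ1 : φ 1 = 1) (hψ1 : ψ 1 = 1)
    (A B : Subalgebra ℂ M) (hcf : CFree M φ ψ A B)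
    (a b : M) (ha : a ∈ A) (hb : b ∈ B) :
    (∀ n : ℕ, φ (a * b * a ^ n)
        = φ (a ^ (n + 1)) * ψ b + φ a * φ (a ^ n) * (φ b - ψ b)) ∧
    (∀ Q : Polynomial ℂ,
      φ (a * b * Polynomial.aeval a Q)
        = φ ((ψ b • a + (φ a * (φ b - ψ b)) • (1 : M)) * Polynomial.aeval a Q)) := by
  refine ⟨fun n => ?_, fun Q => ?_⟩
  · rw [hcf.map_mul_mul_of_mem hφ1 hψ1 ha hb (pow_mem ha n), ← pow_succ']
    ring
  · have hQ : Polynomial.aeval a Q ∈ A := Algebra.adjoin_le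
      (Set.singleton_subset_iff.mpr ha) (Polynomial.aeval_mem_adjoin_singleton ℂ a)
    rw [hcf.map_mul_mul_of_mem hφ1 hψ1 ha hb hQ, add_mul, smul_mul_assoc, smul_mul_assoc,
      one_mul, map_add, map_smul, map_smul, smul_eq_mul, smul_eq_mul]
    ring
end

section
/- Let φ be a state on ℂ⟨X⟩ (equivalently a moment sequence) defined from another state ψ by φ(R) = ψ((1 − sX)^{−1} R) / M^ψ(s), where (1 − sX)^{−1} is a formal power series in s and M^ψ(s) = ψ((1−sX)^{−1}). Then the moment generating functions satisfy, as formal power series in z (with coefficients rational in s): M^φ(z) = (s M^ψ(s) − z M^ψ(z)) / ((s − z) M^ψ(s)), and consequently the shifted Boolean transforms satisfy η̃^φ(z) = (M^ψ(s) − M^ψ(z)) / (s M^ψ(s) − z M^ψ(z)). -/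
/-!
Both moment generating functions are read off the double series
`T = ∑ s^i z^j m_{i+j}`. Summing it row by row gives `M^φ(z) M^ψ(s) = T`; summing it along
antidiagonals and using `(s - z) ∑_{i+j=n} s^i z^j = s^{n+1} - z^{n+1}` (the coefficientwise form
of the partial fraction identity) gives `(s - z) T = s M^ψ(s) - z M^ψ(z)`. The formula for `η̃^φ`
is then algebra.
-/

open Finset

theorem HasSum.sum_antidiagonal {α A : Type*} [AddCommMonoid α] [TopologicalSpace α]
    [ContinuousAdd α] [RegularSpace α] [AddCommMonoid A] [HasAntidiagonal A]
    {f : A × A → α} {a : α}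
    (hf : HasSum f a) : HasSum (fun n ↦ ∑ p ∈ antidiagonal n, f p) a :=
  (HasAntidiagonal.sigmaAntidiagonalEquivProd.hasSum_iff.mpr hf).sigma fun n ↦
    (sum_coe_sort (antidiagonal n) f) ▸ hasSum_fintype _

theorem sub_mul_sum_antidiagonal_pow {R : Type*} [CommRing R] (s z : R) (n : ℕ) :
    (s - z) * ∑ p ∈ antidiagonal n, s ^ p.1 * z ^ p.2 = s ^ (n + 1) - z ^ (n + 1) := by
  rw [Nat.sum_antidiagonal_eq_sum_range_succ (fun i j ↦ s ^ i * z ^ j), mul_comm, ← geom_sum₂_mul]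
  simp

theorem sub_mul_tsum_pow_mul_pow_mul_add {R : Type*} [CommRing R] [TopologicalSpace R]
    [IsTopologicalRing R] [T3Space R] (m : ℕ → R) (s z : R)
    (hs : Summable fun n ↦ m n * s ^ n) (hz : Summable fun n ↦ m n * z ^ n)
    (h : Summable fun p : ℕ × ℕ ↦ s ^ p.1 * z ^ p.2 * m (p.1 + p.2)) :
    (s - z) * ∑' p : ℕ × ℕ, s ^ p.1 * z ^ p.2 * m (p.1 + p.2) =
      s * ∑' n, m n * s ^ n - z * ∑' n, m n * z ^ n := by
  have hterm : ∀ n, (s - z) * ∑ p ∈ antidiagonal n, s ^ p.1 * z ^ p.2 * m (p.1 + p.2) =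
      s * (m n * s ^ n) - z * (m n * z ^ n) := fun n ↦ by
    rw [sum_congr rfl fun p hp ↦ by rw [mem_antidiagonal.mp hp], ← sum_mul]
    linear_combination m n * sub_mul_sum_antidiagonal_pow s z n
  refine (h.hasSum.sum_antidiagonal.mul_left (s - z)).unique ?_
  simp only [hterm]
  exact (hs.hasSum.mul_left s).sub (hz.hasSum.mul_left z)

theorem tsum_tsum_pow_mul_apply_add_mul_pow {𝕜 : Type*} [NormedField 𝕜] [CompleteSpace 𝕜]
    (m : ℕ → 𝕜) (s z : 𝕜) (h : Summable fun p : ℕ × ℕ ↦ s ^ p.1 * z ^ p.2 * m (p.1 + p.2)) :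
    ∑' n, (∑' j, s ^ j * m (j + n)) * z ^ n = ∑' p : ℕ × ℕ, s ^ p.1 * z ^ p.2 * m (p.1 + p.2) := by
  rw [← (Equiv.prodComm ℕ ℕ).tsum_eq]
  simp only [Equiv.prodComm_apply]
  rw [h.prod_symm.tsum_prod]
  refine tsum_congr fun n ↦ ?_
  rw [← tsum_mul_right]
  exact tsum_congr fun j ↦ by simp only [Prod.swap_prod_mk]; ring

theorem moment_transform_of_tilted_state_general
    (m : ℕ → ℂ) (s z : ℂ) (hsz : s ≠ z) (hz0 : z ≠ 0)
    (hs : Summable fun n : ℕ => m n * s ^ n)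
    (hzs : Summable fun n : ℕ => m n * z ^ n)
    (hdouble : Summable fun p : ℕ × ℕ => s ^ p.1 * z ^ p.2 * m (p.1 + p.2))
    (Mψs Mψz Mφz : ℂ)
    (hMψs : Mψs = ∑' n : ℕ, m n * s ^ n) (hMs0 : Mψs ≠ 0)
    (hMψz : Mψz = ∑' n : ℕ, m n * z ^ n)
    (hMφz : Mφz = ∑' n : ℕ, ((∑' j : ℕ, s ^ j * m (j + n)) / Mψs) * z ^ n) :
    Mφz = (s * Mψs - z * Mψz) / ((s - z) * Mψs) ∧
    (Mφz - 1) / (z * Mφz) = (Mψs - Mψz) / (s * Mψs - z * Mψz) := by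
  have hsz' : s - z ≠ 0 := sub_ne_zero.mpr hsz
  have hpartial := sub_mul_tsum_pow_mul_pow_mul_add m s z hs hzs hdouble
  rw [← hMψs, ← hMψz] at hpartial
  have hMφ : Mφz = (s * Mψs - z * Mψz) / ((s - z) * Mψs) := by
    simp only [hMφz, div_mul_eq_mul_div, tsum_div_const,
      tsum_tsum_pow_mul_apply_add_mul_pow m s z hdouble]
    rw [← hpartial]
    field_simp
  refine ⟨hMφ, ?_⟩
  rcases eq_or_ne (s * Mψs - z * Mψz) 0 with hD | hD
  · -- then `Mφz = 0` and both sides are junk values `_ / 0`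
    simp [hMφ, hD]
  · rw [hMφ]
    field_simp
    ring

/-- let `ψ` be the state on `ℂ⟨X⟩` with moment sequence `m`
(`m 0 = 1`), and let `φ` be the state `φ(R) = ψ((1−sX)^{-1}R)/M^ψ(s)`, so that
its moments are `φ(Xᵏ) = (∑_j s^j m_{j+k})/M^ψ(s)`.  Then the moment generating
functions satisfy `M^φ(z) = (s M^ψ(s) − z M^ψ(z)) / ((s − z) M^ψ(s))`, and the
shifted Boolean transform `η̃^φ(z) = (M^φ(z) − 1)/(z M^φ(z))` satisfies
`η̃^φ(z) = (M^ψ(s) − M^ψ(z)) / (s M^ψ(s) − z M^ψ(z))`. -/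
theorem moment_transform_of_tilted_state
    (m : ℕ → ℂ) (hm0 : m 0 = 1) (s z : ℂ) (hsz : s ≠ z) (hz0 : z ≠ 0)
    (hs : Summable fun n : ℕ => m n * s ^ n)
    (hzs : Summable fun n : ℕ => m n * z ^ n)
    (hφk : ∀ k : ℕ, Summable fun j : ℕ => s ^ j * m (j + k))
    (hdouble : Summable fun p : ℕ × ℕ => s ^ p.1 * z ^ p.2 * m (p.1 + p.2))
    (Mψs Mψz Mφz : ℂ)
    (hMψs : Mψs = ∑' n : ℕ, m n * s ^ n) (hMs0 : Mψs ≠ 0)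
    (hMψz : Mψz = ∑' n : ℕ, m n * z ^ n)
    (hMφz : Mφz = ∑' n : ℕ, ((∑' j : ℕ, s ^ j * m (j + n)) / Mψs) * z ^ n) :
    Mφz = (s * Mψs - z * Mψz) / ((s - z) * Mψs) ∧
    (Mφz - 1) / (z * Mφz) = (Mψs - Mψz) / (s * Mψs - z * Mψz) :=
  moment_transform_of_tilted_state_general m s z hsz hz0 hs hzs hdouble Mψs Mψz Mφz hMψs hMs0 hMψz
    hMφz
end

section
/- With ψ the standard semicircle moment functional (M^ψ(z) = z²M^ψ(z)² + 1) and φ defined by φ(R) = ψ((1−sX)^{−1}R)/M^ψ(s), the shifted Boolean transform of φ splits additively: η̃^φ(z) = η̃^ψ(s) + η̃^ψ(z), where η̃^ψ(z) = z M^ψ(z). -/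
/-!
The semicircle moment function is `M(t) = C(t²)` for the Catalan generating function
`C(x) = ∑ₙ catalan n xⁿ`, which converges for `‖x‖ < 1/4` because `catalan n ≤ 4ⁿ`; the Catalan
recursion is the Cauchy product `C(x)² = ∑ₙ catalan (n+1) xⁿ`, whence `C(x) = x C(x)² + 1` and
`M(t) = t² M(t)² + 1`. The rest is algebra: subtracting the equations for `s` and `z` gives
`M(s) − M(z) = (s M(s) − z M(z)) (s M(s) + z M(z))`, which is exactly the identity
`(M^φ(z) − 1) / (z M^φ(z)) = s M(s) + z M(z)` once the denominators are cleared.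
-/

open Finset

theorem catalan_le_four_pow (n : ℕ) : catalan n ≤ 4 ^ n :=
  calc catalan n ≤ (n + 1) * catalan n := Nat.le_mul_of_pos_left _ n.succ_pos
    _ = n.centralBinom := succ_mul_catalan_eq_centralBinom n
    _ ≤ 4 ^ n := Nat.centralBinom_le_four_pow n

theorem sum_antidiagonal_catalan_mul_pow {R : Type*} [CommSemiring R] (x : R) (n : ℕ) :
    ∑ kl ∈ antidiagonal n, ((catalan kl.1 : R) * x ^ kl.1) * ((catalan kl.2 : R) * x ^ kl.2) =
      (catalan (n + 1) : R) * x ^ n := by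
  rw [catalan_succ', Nat.cast_sum, sum_mul]
  refine sum_congr rfl fun kl hkl => ?_
  rw [← mem_antidiagonal.mp hkl, pow_add]
  push_cast
  ring

section CatalanSeries

variable {R : Type*} [NormedCommRing R] [NormOneClass R]

theorem summable_norm_catalan_mul_pow {x : R} (hx : ‖x‖ < 1 / 4) :
    Summable fun n : ℕ => ‖(catalan n : R) * x ^ n‖ := by
  have hgeom : Summable fun n : ℕ => (4 * ‖x‖) ^ n :=
    summable_geometric_of_lt_one (by positivity) (by linarith)
  refine hgeom.of_nonneg_of_le (fun n => norm_nonneg _) fun n => ?_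
  calc ‖(catalan n : R) * x ^ n‖ ≤ ‖(catalan n : R)‖ * ‖x ^ n‖ := norm_mul_le _ _
    _ ≤ (4 : ℝ) ^ n * ‖x‖ ^ n := by
        have hcat : ‖(catalan n : R)‖ ≤ catalan n := by
          simpa using Nat.norm_cast_le (α := R) (catalan n)
        gcongr
        · exact hcat.trans (by exact_mod_cast catalan_le_four_pow n)
        · exact norm_pow_le x n
    _ = (4 * ‖x‖) ^ n := (mul_pow _ _ _).symm

theorem tsum_catalan_mul_pow_eq [CompleteSpace R] {x : R} (hx : ‖x‖ < 1 / 4) :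
    ∑' n : ℕ, (catalan n : R) * x ^ n = x * (∑' n : ℕ, (catalan n : R) * x ^ n) ^ 2 + 1 := by
  set c : ℕ → R := fun n => (catalan n : R) * x ^ n
  have hc := summable_norm_catalan_mul_pow hx
  have hsq : HasSum (fun n => (catalan (n + 1) : R) * x ^ n) ((∑' n, c n) ^ 2) := by
    have := (summable_sum_mul_antidiagonal_of_summable_norm' hc hc.of_norm hc hc.of_norm).hasSum
    rw [← tsum_mul_tsum_eq_tsum_sum_antidiagonal_of_summable_norm hc hc, ← sq] at this
    simpa only [sum_antidiagonal_catalan_mul_pow] using this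
  have htail : ∑' n, c (n + 1) = x * (∑' n, c n) ^ 2 :=
    calc ∑' n, c (n + 1) = ∑' n, x * ((catalan (n + 1) : R) * x ^ n) :=
          tsum_congr fun n => by simp only [c, pow_succ]; ring
      _ = x * (∑' n, c n) ^ 2 := (hsq.mul_left x).tsum_eq
  calc ∑' n, c n = c 0 + ∑' n, c (n + 1) := hc.of_norm.tsum_eq_zero_add
    _ = x * (∑' n, c n) ^ 2 + 1 := by rw [htail, add_comm]; simp [c]

end CatalanSeries

theorem semicircle_moment_eq {t : ℝ} (ht : |t| < 1 / 2) :
    ∑' n : ℕ, (catalan n : ℝ) * t ^ (2 * n) =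
      t ^ 2 * (∑' n : ℕ, (catalan n : ℝ) * t ^ (2 * n)) ^ 2 + 1 := by
  have ht2 : ‖t ^ 2‖ < 1 / 4 := by
    rw [norm_pow, Real.norm_eq_abs]
    nlinarith [abs_nonneg t]
  simpa only [pow_mul] using tsum_catalan_mul_pow_eq ht2

section TiltedTransform

variable {K : Type*} [Field K] {s z Ms Mz : K}

theorem ne_zero_of_eq_sq_mul_sq_add_one {t M : K} (hM : M = t ^ 2 * M ^ 2 + 1) : M ≠ 0 := by
  rintro rfl
  simp at hM

theorem mul_sub_mul_ne_zero_of_semicircle (hMs : Ms = s ^ 2 * Ms ^ 2 + 1)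
    (hMz : Mz = z ^ 2 * Mz ^ 2 + 1) (hsz : s ≠ z) : s * Ms - z * Mz ≠ 0 := by
  intro h
  have hMsz : Ms = Mz := by linear_combination hMs - hMz + (s * Ms + z * Mz) * h
  apply hsz
  refine mul_right_cancel₀ (ne_zero_of_eq_sq_mul_sq_add_one hMs) ?_
  linear_combination h - z * hMsz

theorem tilted_boolean_transform_eq_add (hMs : Ms = s ^ 2 * Ms ^ 2 + 1)
    (hMz : Mz = z ^ 2 * Mz ^ 2 + 1) (hsz : s ≠ z) (hz : z ≠ 0) :
    ((s * Ms - z * Mz) / ((s - z) * Ms) - 1) / (z * ((s * Ms - z * Mz) / ((s - z) * Ms))) =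
      s * Ms + z * Mz := by
  have hMs0 := ne_zero_of_eq_sq_mul_sq_add_one hMs
  have hnum := mul_sub_mul_ne_zero_of_semicircle hMs hMz hsz
  have hsz' : s - z ≠ 0 := sub_ne_zero_of_ne hsz
  field_simp
  linear_combination z * (hMs - hMz)

end TiltedTransform

/-- for `ψ` the standard semicircle moment functional (with
moment function `M(t) = ∑ₙ Cₙ t^{2n}` satisfying `M = t²M² + 1`) and `φ` the
tilted state `φ(R) = ψ((1−sX)^{-1}R)/M^ψ(s)`, whose moment transform is
`M^φ(z) = (s M^ψ(s) − z M^ψ(z))/((s−z) M^ψ(s))`, the shifted Boolean transform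
of `φ` splits additively:
`η̃^φ(z) = (M^φ(z) − 1)/(z M^φ(z)) = η̃^ψ(s) + η̃^ψ(z)`, where
`η̃^ψ(t) = t M^ψ(t)`. -/
theorem semicircle_tilted_boolean_transform_additive
    (s z : ℝ) (hs : |s| < 1 / 2) (hz : |z| < 1 / 2) (hsz : s ≠ z) (hz0 : z ≠ 0)
    (Ms Mz Mφz : ℝ)
    (hMs : Ms = ∑' n : ℕ, (catalan n : ℝ) * s ^ (2 * n))
    (hMz : Mz = ∑' n : ℕ, (catalan n : ℝ) * z ^ (2 * n))
    (hMφz : Mφz = (s * Ms - z * Mz) / ((s - z) * Ms)) :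
    (Mφz - 1) / (z * Mφz) = s * Ms + z * Mz := by
  subst hMs hMz hMφz
  exact tilted_boolean_transform_eq_add (semicircle_moment_eq hs) (semicircle_moment_eq hz) hsz hz0
end

section
/- Let ψ be a linear functional on ℂ⟨X,Y⟩ making X and Y free, and let Ψ = (1 − zXY)^{−1} as a formal power series in z with coefficients in ℂ⟨X,Y⟩. Define E_X^ψ as the free conditional expectation onto ℂ⟨X⟩ (the unique ℂ⟨X⟩-bimodule map given by the Boolean cumulant expansion formula for free variables). Then E_X^ψ[Ψ] = (1 − ω_X(z)·X)^{−1} as formal power series, where ω_X(z) = z·β_Y^{b,ψ}(YΨ) is a formal power series in z with scalar coefficients (the subordination function), and consequently ψ(Ψ) = M_X^ψ(ω_X(z)), i.e., the moments of XY with respect to ψ are subordinated to the moments of X. -/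
open TensorProduct

noncomputable section

/-- The free algebra `ℂ⟨X,Y⟩` on two generators. -/
abbrev FA : Type := FreeAlgebra ℂ Bool

/-- The generator `X`. -/
def Xg : FA := FreeAlgebra.ι ℂ true

/-- The generator `Y`. -/
def Yg : FA := FreeAlgebra.ι ℂ false

/-- The resolvent `Ψ = (1 − zXY)^{-1} = ∑ₙ zⁿ (XY)ⁿ`. -/
def resolventXY : PowerSeries FA := PowerSeries.mk fun n => (Xg * Yg) ^ n

/-- The map `β ⊗ E : u ⊗ v ↦ β(u) • E(v)`. -/
def tensBE (βb : FA →ₗ[ℂ] ℂ) (E : FA →ₗ[ℂ] FA) : FA ⊗[ℂ] FA →ₗ[ℂ] FA :=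
  TensorProduct.lift (LinearMap.mk₂ ℂ (fun u v => βb u • E v)
    (fun u u' v => by simp [add_smul])
    (fun c u v => by simp [smul_smul])
    (fun u v v' => by simp [smul_add])
    (fun c u v => by simp; rw [smul_comm]))

/-- Coefficientwise extension of `E` to formal power series. -/
def psE (E : FA →ₗ[ℂ] FA) (F : PowerSeries FA) : PowerSeries FA :=
  PowerSeries.mk fun n => E (PowerSeries.coeff n F)

/-- Formal composition `f ∘ g` of power series (`g` with zero constant term):
the `n`-th coefficient is `∑_{k ≤ n} fₖ · [zⁿ](gᵏ)`. -/
def psComp (f g : PowerSeries ℂ) : PowerSeries ℂ :=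
  PowerSeries.mk fun n =>
    ∑ k ∈ Finset.range (n + 1),
      PowerSeries.coeff k f * PowerSeries.coeff n (g ^ k)

/-- The subordination function `ω_X(z) = z·β_Y^{b,ψ}(YΨ)`. -/
def omegaX (βb : FA →ₗ[ℂ] ℂ) : PowerSeries ℂ :=
  PowerSeries.X * PowerSeries.mk fun n => βb (Yg * (Xg * Yg) ^ n)


/-! Since `δ̃_X(Y(XY)ⁿ) = ∑_{i<n} Y(XY)ⁱ ⊗ (XY)ⁿ⁻ⁱ`, the recurrence and the module property give `E[(XY)ⁿ⁺¹] = X · ∑_{i+j=n} β(Y(XY)ⁱ) E[(XY)ʲ]`. In power series this says exactly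
`(1 − ω_X(z) X) · E[Ψ] = 1`; as `ω_X` has no constant term, `1 − ω_X(z) X` is invertible and
`E[Ψ] = ∑ₖ (ω_X(z) X)ᵏ`, and applying `ψ = ψ ∘ E` yields `ψ(Ψ) = ∑ₖ ψ(Xᵏ) ω_X(z)ᵏ`. -/

open Finset

section Leibniz

variable {R A : Type*} [CommRing R] [Ring A] [Algebra R A] {δ : A → A ⊗[R] A}

theorem leibniz_apply_one
    (hδ : ∀ a b : A, δ (a * b) = δ a * (1 ⊗ₜ b) + (a ⊗ₜ 1) * δ b) : δ 1 = 0 := by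
  have h := hδ 1 1
  rwa [one_mul, ← Algebra.TensorProduct.one_def, mul_one, one_mul, left_eq_add] at h

theorem leibniz_mul_left_one_tmul
    (hδ : ∀ a b : A, δ (a * b) = δ a * (1 ⊗ₜ b) + (a ⊗ₜ 1) * δ b) (x a b : A) :
    (1 ⊗ₜ[R] x) * δ (a * b) =
      (1 ⊗ₜ x) * δ a * (1 ⊗ₜ b) + (a ⊗ₜ 1) * ((1 ⊗ₜ x) * δ b) := by
  have hcomm : Commute ((1 : A) ⊗ₜ[R] x) (a ⊗ₜ 1) := by
    simp only [Commute, SemiconjBy, Algebra.TensorProduct.tmul_mul_tmul, one_mul, mul_one]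
  rw [hδ, mul_add, ← mul_assoc, ← mul_assoc, ← mul_assoc, hcomm.eq]

theorem leibniz_apply_pow
    (hδ : ∀ a b : A, δ (a * b) = δ a * (1 ⊗ₜ b) + (a ⊗ₜ 1) * δ b)
    {w : A} (hw : δ w = 1 ⊗ₜ w) (n : ℕ) :
    δ (w ^ n) = ∑ i ∈ range n, (w ^ i) ⊗ₜ (w ^ (n - i)) := by
  induction n with
  | zero => simpa using leibniz_apply_one hδ
  | succ n ih =>
    rw [pow_succ', hδ, hw, ih, sum_range_succ', mul_sum, add_comm,
      Algebra.TensorProduct.tmul_mul_tmul, one_mul, ← pow_succ']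
    congr 1
    · refine sum_congr rfl fun i _ => ?_
      rw [Algebra.TensorProduct.tmul_mul_tmul, one_mul, ← pow_succ', Nat.add_sub_add_right]
    · rw [pow_zero, Nat.sub_zero]

end Leibniz

section Recurrence

variable {βb : FA →ₗ[ℂ] ℂ} {E : FA →ₗ[ℂ] FA} {D : FA →ₗ[ℂ] FA ⊗[ℂ] FA}

theorem condExp_one (ψ : FA →ₗ[ℂ] ℂ) (hψ1 : ψ 1 = 1) (hD1 : D 1 = 0)
    (hrec : ∀ W : FA, E W = βb W • (1 : FA) + tensBE βb E (((1 : FA) ⊗ₜ[ℂ] Xg) * D W))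
    (hψE : ∀ W : FA, ψ (E W) = ψ W) : E 1 = 1 := by
  have hE1 : E 1 = βb 1 • (1 : FA) := by simpa [hD1] using hrec 1
  have hβ1 : βb 1 = 1 := by simpa [hE1, hψ1] using hψE 1
  rw [hE1, hβ1, one_smul]

theorem divDiff_Y_mul_XY_pow
    (hLeib : ∀ a b : FA, D (a * b) = D a * (1 ⊗ₜ[ℂ] b) + (a ⊗ₜ[ℂ] 1) * D b)
    (hDX : D Xg = 1 ⊗ₜ[ℂ] 1) (hDY : D Yg = 0) (n : ℕ) :
    (1 ⊗ₜ Xg) * D (Yg * (Xg * Yg) ^ n) =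
      ∑ i ∈ range n, (Yg * (Xg * Yg) ^ i) ⊗ₜ[ℂ] ((Xg * Yg) ^ (n - i)) := by
  have hXY : (1 ⊗ₜ Xg) * D (Xg * Yg) = 1 ⊗ₜ[ℂ] (Xg * Yg) := by
    rw [leibniz_mul_left_one_tmul hLeib, hDX, hDY]
    simp only [Algebra.TensorProduct.tmul_mul_tmul, mul_one, mul_zero, add_zero]
  have hXYpow : (1 ⊗ₜ Xg) * D ((Xg * Yg) ^ n) =
      ∑ i ∈ range n, ((Xg * Yg) ^ i) ⊗ₜ[ℂ] ((Xg * Yg) ^ (n - i)) :=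
    leibniz_apply_pow (δ := fun W => (1 ⊗ₜ Xg) * D W) (leibniz_mul_left_one_tmul hLeib Xg) hXY n
  rw [leibniz_mul_left_one_tmul hLeib, hDY, mul_zero, zero_mul, zero_add, hXYpow, mul_sum]
  simp only [Algebra.TensorProduct.tmul_mul_tmul, one_mul]

theorem condExp_Y_mul_XY_pow
    (hLeib : ∀ a b : FA, D (a * b) = D a * (1 ⊗ₜ[ℂ] b) + (a ⊗ₜ[ℂ] 1) * D b)
    (hDX : D Xg = 1 ⊗ₜ[ℂ] 1) (hDY : D Yg = 0)
    (hrec : ∀ W : FA, E W = βb W • (1 : FA) + tensBE βb E (((1 : FA) ⊗ₜ[ℂ] Xg) * D W))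
    (hE1 : E 1 = 1) (n : ℕ) :
    E (Yg * (Xg * Yg) ^ n) =
      ∑ p ∈ antidiagonal n, βb (Yg * (Xg * Yg) ^ p.1) • E ((Xg * Yg) ^ p.2) := by
  rw [hrec, divDiff_Y_mul_XY_pow hLeib hDX hDY, map_sum,
    Nat.sum_antidiagonal_eq_sum_range_succ_mk, sum_range_succ, Nat.sub_self, pow_zero, hE1,
    add_comm]
  simp only [tensBE, TensorProduct.lift.tmul, LinearMap.mk₂_apply]

theorem condExp_XY_pow_succ
    (hLeib : ∀ a b : FA, D (a * b) = D a * (1 ⊗ₜ[ℂ] b) + (a ⊗ₜ[ℂ] 1) * D b)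
    (hDX : D Xg = 1 ⊗ₜ[ℂ] 1) (hDY : D Yg = 0)
    (hrec : ∀ W : FA, E W = βb W • (1 : FA) + tensBE βb E (((1 : FA) ⊗ₜ[ℂ] Xg) * D W))
    (hmod : ∀ W : FA, E (Xg * W) = Xg * E W) (hE1 : E 1 = 1) (n : ℕ) :
    E ((Xg * Yg) ^ (n + 1)) =
      ∑ p ∈ antidiagonal n, βb (Yg * (Xg * Yg) ^ p.1) • (Xg * E ((Xg * Yg) ^ p.2)) := by
  rw [pow_succ', mul_assoc, hmod, condExp_Y_mul_XY_pow hLeib hDX hDY hrec hE1, mul_sum]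
  simp only [mul_smul_comm]

end Recurrence

namespace PowerSeries

theorem coeff_eq_coeff_geom_sum_of_one_sub_mul_eq_one {R : Type*} [Ring R] {G F : R⟦X⟧}
    (hG : constantCoeff G = 0) (hF : (1 - G) * F = 1) {n m : ℕ} (hnm : n < m) :
    coeff n F = coeff n (∑ k ∈ range m, G ^ k) := by
  have hgeom : ∑ k ∈ range m, G ^ k = F - G ^ m * F := by
    calc ∑ k ∈ range m, G ^ k = (∑ k ∈ range m, G ^ k) * ((1 - G) * F) := by rw [hF, mul_one]
      _ = F - G ^ m * F := by rw [← mul_assoc, geom_sum_mul_neg, sub_mul, one_mul]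
  rw [hgeom, map_sub, coeff_of_lt_order (φ := G ^ m * F) n, sub_zero]
  calc (n : ℕ∞) < m := by exact_mod_cast hnm
    _ ≤ order (G ^ m) := le_order_pow_of_constantCoeff_eq_zero m hG
    _ ≤ order (G ^ m) + order F := le_self_add
    _ ≤ order (G ^ m * F) := le_order_mul _ _

end PowerSeries

section Subordination

open PowerSeries

def omegaXMulX (βb : FA →ₗ[ℂ] ℂ) : PowerSeries FA :=
  map (algebraMap ℂ FA) (omegaX βb) * C Xg

variable {βb : FA →ₗ[ℂ] ℂ} {E : FA →ₗ[ℂ] FA}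

theorem constantCoeff_omegaXMulX : constantCoeff (omegaXMulX βb) = 0 := by
  simp [omegaXMulX, omegaX]

theorem coeff_succ_omegaXMulX (n : ℕ) :
    coeff (n + 1) (omegaXMulX βb) = βb (Yg * (Xg * Yg) ^ n) • Xg := by
  rw [omegaXMulX, coeff_mul_C, coeff_map, omegaX, coeff_succ_X_mul, coeff_mk, Algebra.smul_def]

theorem omegaXMulX_pow (k : ℕ) :
    omegaXMulX βb ^ k = map (algebraMap ℂ FA) (omegaX βb ^ k) * C (Xg ^ k) := by
  have hcomm : Commute (map (algebraMap ℂ FA) (omegaX βb)) (C Xg) := by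
    ext m
    rw [coeff_mul_C, coeff_C_mul, coeff_map]
    exact Algebra.commutes _ _
  rw [omegaXMulX, hcomm.mul_pow, map_pow, map_pow]

theorem coeff_psE_resolventXY (n : ℕ) :
    coeff n (psE E resolventXY) = E ((Xg * Yg) ^ n) := by
  rw [psE, resolventXY, coeff_mk, coeff_mk]

theorem one_sub_omegaXMulX_mul_psE (hE1 : E 1 = 1)
    (hsucc : ∀ n, E ((Xg * Yg) ^ (n + 1)) =
      ∑ p ∈ antidiagonal n, βb (Yg * (Xg * Yg) ^ p.1) • (Xg * E ((Xg * Yg) ^ p.2))) :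
    (1 - omegaXMulX βb) * psE E resolventXY = 1 := by
  ext n
  rw [sub_mul, one_mul, map_sub, coeff_mul, coeff_one]
  cases n with
  | zero => simp [coeff_psE_resolventXY, hE1, constantCoeff_omegaXMulX]
  | succ n =>
    simp [Nat.sum_antidiagonal_succ, coeff_psE_resolventXY, hsucc, coeff_succ_omegaXMulX,
      constantCoeff_omegaXMulX]

theorem coeff_psE_resolventXY_eq_sum (hinv : (1 - omegaXMulX βb) * psE E resolventXY = 1)
    (n : ℕ) :
    coeff n (psE E resolventXY) = ∑ k ∈ range (n + 1), coeff n (omegaX βb ^ k) • Xg ^ k := by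
  rw [coeff_eq_coeff_geom_sum_of_one_sub_mul_eq_one constantCoeff_omegaXMulX hinv
    (Nat.lt_succ_self n), map_sum]
  simp only [omegaXMulX_pow, coeff_mul_C, coeff_map, Algebra.smul_def]

end Subordination

/-- subordination for the resolvent of `XY`.  Assume `X, Y` are
free with respect to `ψ`, and let `E = E_X^ψ` be the free conditional
expectation onto `ℂ⟨X⟩`, characterized by the Boolean cumulant recurrence
`E[W] = β_Y^{b,ψ}(W) + (β_Y^{b,ψ} ⊗ E)[δ̃_X(W)]` (with `δ̃_X = (1⊗X)∂_X`),
the `ℂ⟨X⟩`-module property, and `ψ ∘ E = ψ`.  Then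
`E_X^ψ[Ψ] = (1 − ω_X(z)·X)^{-1}` for `Ψ = (1 − zXY)^{-1}`, where
`ω_X(z) = z·β_Y^{b,ψ}(YΨ)`, and consequently `ψ(Ψ) = M_X^ψ(ω_X(z))`. -/
theorem conditional_expectation_resolvent_subordination
    (ψ : FA →ₗ[ℂ] ℂ) (hψ1 : ψ 1 = 1)
    (βb : FA →ₗ[ℂ] ℂ) (E : FA →ₗ[ℂ] FA)
    (D : FA →ₗ[ℂ] FA ⊗[ℂ] FA)
    (hLeib : ∀ a b : FA, D (a * b) = D a * (1 ⊗ₜ[ℂ] b) + (a ⊗ₜ[ℂ] 1) * D b)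
    (hDX : D Xg = 1 ⊗ₜ[ℂ] 1) (hDY : D Yg = 0)
    (hrec : ∀ W : FA,
      E W = βb W • (1 : FA) + tensBE βb E (((1 : FA) ⊗ₜ[ℂ] Xg) * D W))
    (hmod : ∀ W : FA, E (Xg * W) = Xg * E W)
    (hψE : ∀ W : FA, ψ (E W) = ψ W) :
    (psE E resolventXY *
        (1 - PowerSeries.map (algebraMap ℂ FA) (omegaX βb) * PowerSeries.C Xg) = 1) ∧
    ((1 - PowerSeries.map (algebraMap ℂ FA) (omegaX βb) * PowerSeries.C Xg) *
        psE E resolventXY = 1) ∧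
    (PowerSeries.mk fun n => ψ ((Xg * Yg) ^ n))
      = psComp (PowerSeries.mk fun n => ψ (Xg ^ n)) (omegaX βb) := by
  have hE1 : E 1 = 1 := condExp_one ψ hψ1 (leibniz_apply_one hLeib) hrec hψE
  have hinv : (1 - omegaXMulX βb) * psE E resolventXY = 1 :=
    one_sub_omegaXMulX_mul_psE hE1 (condExp_XY_pow_succ hLeib hDX hDY hrec hmod hE1)
  obtain ⟨u, hu⟩ : IsUnit (1 - omegaXMulX βb) :=
    PowerSeries.isUnit_iff_constantCoeff.mpr (by simp [constantCoeff_omegaXMulX])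
  refine ⟨?_, hinv, ?_⟩
  · rw [← hu] at hinv
    change psE E resolventXY * (1 - omegaXMulX βb) = 1
    rw [← hu, Units.eq_inv_of_mul_eq_one_left hinv, Units.inv_mul]
  · ext n
    rw [PowerSeries.coeff_mk, psComp, PowerSeries.coeff_mk, ← hψE, ← coeff_psE_resolventXY,
      coeff_psE_resolventXY_eq_sum hinv, map_sum]
    refine sum_congr rfl fun k _ => ?_
    rw [map_smul, PowerSeries.coeff_mk, smul_eq_mul, mul_comm]
end
end

section
/- Let ω_X, ω_Y, η̃_X^ψ, η̃_Y^ψ be formal power series (over ℂ) satisfying the subordination system ω_X(z) = z·η̃_Y^ψ(ω_Y(z)) and ω_Y(z) = z·η̃_X^ψ(ω_X(z)), and let η̃ transforms relate to moment series by M(w) = (1 − w·η̃(w))^{−1}. Define η̃_{XY}(z) by the relation M_{XY}(z) = M_X(ω_X(z)) (subordination). Then η_{XY}(z) := z·η̃_{XY}(z) satisfies η_{XY}(z) = ω_X(z)·η̃_X(ω_X(z)) = η_X(ω_X(z)), and η̃_{XY}(z) = η̃_X(ω_X(z))·η̃_Y(ω_Y(z)). Consequently, setting Σ(u) = η̃(η^{−1}(u))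 (where η(z) = z·η̃(z) and η^{−1} is the compositional inverse, assuming η'(0) ≠ 0), one has Σ_{XY}(u) = Σ_X(u)·Σ_Y(u). -/
/-!
Composition with a series of zero constant term is an associative substitution
homomorphism (`psComp` is Mathlib's `PowerSeries.subst`). Inverting `M_{XY} = M_X ∘ ω_X`
gives `η_{XY} = η_X ∘ ω_X = ω_X · η̃_X(ω_X) = z · η̃_Y(ω_Y) · η̃_X(ω_X)`; cancelling `z`
gives the product formula for `η̃_{XY}`, and reading the same identity through
`ω_Y = z · η̃_X(ω_X)` gives `η_{XY} = η_Y ∘ ω_Y` as well. Hence `ω_X = η_X⁻¹ ∘ η_{XY}` and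
`ω_Y = η_Y⁻¹ ∘ η_{XY}`, and composing the product formula with `η_{XY}⁻¹` gives
`Σ_{XY} = Σ_X · Σ_Y`.
-/

noncomputable section

open PowerSeries

theorem psComp_eq_subst {g : PowerSeries ℂ} (hg : constantCoeff g = 0) (f : PowerSeries ℂ) :
    psComp f g = f.subst g := by
  ext n
  have hvanish : ∀ k, n < k → coeff n (g ^ k) = 0 := fun k hk =>
    X_pow_dvd_iff.1 (pow_dvd_pow_of_dvd (X_dvd_iff.2 hg) k) n hk
  rw [psComp, coeff_mk, coeff_subst' (.of_constantCoeff_zero' hg),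
    finsum_eq_sum_of_support_subset (s := Finset.range (n + 1))]
  · simp only [smul_eq_mul]
  · intro k hk
    by_contra hkn
    exact hk (by simp only [hvanish k (by simpa using hkn), smul_zero])

namespace PowerSeries

variable {R : Type*} [CommRing R]

theorem subst_X_mul_of_eq_X_mul {f g ω : R⟦X⟧} (hω : HasSubst ω) (h : ω = X * g) :
    (X * f).subst ω = X * (f.subst ω * g) := by
  rw [subst_mul hω, subst_X hω]
  linear_combination f.subst ω * h

theorem subst_eq_of_subst_eq_of_inverse {ω η φ ψ ι : R⟦X⟧} (hω : HasSubst ω)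
    (hη : HasSubst η) (hφ : HasSubst φ) (hψ : HasSubst ψ) (hcomp : η.subst ω = φ)
    (hι : ι.subst η = X) (hφψ : φ.subst ψ = X) : ω.subst ψ = ι := by
  have hωφ : ω = ι.subst φ := by
    rw [← hcomp, ← subst_comp_subst_apply hη hω, hι, subst_X hω]
  rw [hωφ, subst_comp_subst_apply hφ hψ, hφψ, X_subst]

theorem eq_subst_of_inv_one_sub_subst_mul_eq_one {k : Type*} [Field k] {η ω ζ : k⟦X⟧}
    (hη : constantCoeff η = 0) (hω : HasSubst ω)
    (h : ((1 - η)⁻¹).subst ω * (1 - ζ) = 1) : ζ = η.subst ω := by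
  have hinv : ((1 - η)⁻¹).subst ω * (1 - η.subst ω) = 1 := by
    have := congrArg (substAlgHom (R := k) hω)
      (PowerSeries.inv_mul_cancel (1 - η) (by simp [hη]))
    rwa [map_mul, map_sub, map_one, coe_substAlgHom] at this
  exact sub_right_inj.mp (left_inv_eq_right_inv (by rwa [mul_comm] at h) hinv)

end PowerSeries

/-- multiplicativity of the Popa–Wang `Σ`-transform.  Given
formal power series satisfying the subordination system
`ω_X = z·η̃_Y(ω_Y)`, `ω_Y = z·η̃_X(ω_X)`, with `η_X = z·η̃_X`, `η_Y = z·η̃_Y`,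
moment series `M = (1 − η)⁻¹`, and `η_{XY}` defined through the subordination
relation `M_{XY} = M_X ∘ ω_X` (i.e. `(M_X ∘ ω_X)·(1 − η_{XY}) = 1`), one has
`η_{XY} = η_X ∘ ω_X`, `η̃_{XY} = (η̃_X ∘ ω_X)·(η̃_Y ∘ ω_Y)`, and, with
`inv` denoting compositional inverses of the `η`'s,
`Σ_{XY} = Σ_X · Σ_Y` where `Σ = η̃ ∘ η⁻¹`. -/
theorem sigma_transform_multiplicative
    (etX etY etXY ωX ωY ηX ηY ηXY invX invY invXY : PowerSeries ℂ)
    (hηX : ηX = PowerSeries.X * etX) (hηY : ηY = PowerSeries.X * etY)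
    (hωX : ωX = PowerSeries.X * psComp etY ωY)
    (hωY : ωY = PowerSeries.X * psComp etX ωX)
    (hηXY0 : constantCoeff ηXY = 0)
    (hηXY : ηXY = PowerSeries.X * etXY)
    (hMXY : psComp ((1 - ηX)⁻¹) ωX * (1 - ηXY) = 1)
    (hinvX0 : constantCoeff invX = 0)
    (hinvY0 : constantCoeff invY = 0)
    (hinvXY0 : constantCoeff invXY = 0)
    (hinvX : psComp ηX invX = PowerSeries.X ∧ psComp invX ηX = PowerSeries.X)
    (hinvY : psComp ηY invY = PowerSeries.X ∧ psComp invY ηY = PowerSeries.X)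
    (hinvXY : psComp ηXY invXY = PowerSeries.X ∧
      psComp invXY ηXY = PowerSeries.X) :
    ηXY = psComp ηX ωX ∧
    etXY = psComp etX ωX * psComp etY ωY ∧
    psComp etXY invXY = psComp etX invX * psComp etY invY := by
  have hωX0 : constantCoeff ωX = 0 := by simp [hωX]
  have hωY0 : constantCoeff ωY = 0 := by simp [hωY]
  have hηX0 : constantCoeff ηX = 0 := by simp [hηX]
  have hηY0 : constantCoeff ηY = 0 := by simp [hηY]
  rw [psComp_eq_subst hωY0] at hωX
  rw [psComp_eq_subst hωX0] at hωY hMXY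
  rw [psComp_eq_subst hηX0] at hinvX
  rw [psComp_eq_subst hηY0] at hinvY
  rw [psComp_eq_subst hinvXY0] at hinvXY
  simp only [psComp_eq_subst hωX0, psComp_eq_subst hωY0, psComp_eq_subst hinvX0,
    psComp_eq_subst hinvY0, psComp_eq_subst hinvXY0]
  have hsωX := HasSubst.of_constantCoeff_zero' hωX0
  have hsωY := HasSubst.of_constantCoeff_zero' hωY0
  have hsInvXY := HasSubst.of_constantCoeff_zero' hinvXY0
  have hsubX : ηXY = ηX.subst ωX := eq_subst_of_inv_one_sub_subst_mul_eq_one hηX0 hsωX hMXY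
  have hetXY : etXY = etX.subst ωX * etY.subst ωY :=
    X_mul_cancel (by rw [← hηXY, hsubX, hηX, subst_X_mul_of_eq_X_mul hsωX hωX])
  have hsubY : ηXY = ηY.subst ωY := by
    rw [hηY, subst_X_mul_of_eq_X_mul hsωY hωY, hηXY, hetXY, mul_comm (etY.subst ωY)]
  have hωinv {ω η ι : ℂ⟦X⟧} (hω : HasSubst ω) (hη : constantCoeff η = 0)
      (hcomp : ηXY = η.subst ω) (hι : ι.subst η = X) : ω.subst invXY = ι :=
    subst_eq_of_subst_eq_of_inverse hω (.of_constantCoeff_zero' hη)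
      (.of_constantCoeff_zero' hηXY0) hsInvXY hcomp.symm hι hinvXY.1
  refine ⟨hsubX, hetXY, ?_⟩
  rw [hetXY, subst_mul hsInvXY, subst_comp_subst_apply hsωX hsInvXY,
    subst_comp_subst_apply hsωY hsInvXY, hωinv hsωX hηX0 hsubX hinvX.2,
    hωinv hsωY hηY0 hsubY hinvY.2]
end
end
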